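/- For every nonnegative measurable functional H on E, every k ∈ ℤ and every t > 0, E[H(B^k Y) · 1{‖Y_{−k}‖ > t}] = t^{−α} · E[H(tY) · 1{‖Y_k‖ > 1/t}]. -/

import Mathlib

/-!
Both sides are integrals against the tail measure `ν`, because `Y` has law `ν` restricted to
`{‖y 0‖ > 1}`. The left side integrates `H ∘ B^k` over `{‖y (-k)‖ > t, ‖y 0‖ > 1}`; shift invariance
turns this into the integral of `H` over `{‖y 0‖ > t, ‖y k‖ > 1}`, and the substitution `y = t • z`
together with homogeneity of index `-α` turns that into `t^(-α)` times the integral of `H (t • z)`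
over `{‖z 0‖ > 1, ‖z k‖ > 1/t}`, which is the right side.
-/

open MeasureTheory ProbabilityTheory Set Filter
open scoped ENNReal NNReal Topology

noncomputable section

/-- The iterated backshift operator: `(B^k x) j = x (j - k)`. -/
def backshift {V : Type*} (k : ℤ) (x : ℤ → V) : ℤ → V := fun j => x (j - k)

section Backshift

variable {V : Type*}

@[simp]
lemma backshift_apply (k j : ℤ) (x : ℤ → V) : backshift k x j = x (j - k) := rfl

lemma backshift_backshift (m n : ℤ) (x : ℤ → V) :
    backshift m (backshift n x) = backshift (n + m) x := by
  funext j; simp [sub_sub, add_comm]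

lemma backshift_zero : (backshift 0 : (ℤ → V) → ℤ → V) = id := by
  funext x j; simp

variable [MeasurableSpace V]

lemma measurable_backshift (k : ℤ) : Measurable (backshift k : (ℤ → V) → ℤ → V) :=
  measurable_pi_lambda _ fun j => measurable_pi_apply (j - k)

lemma measurePreserving_backshift {ν : Measure (ℤ → V)}
    (h : MeasurePreserving (backshift 1) ν ν) (k : ℤ) :
    MeasurePreserving (backshift k) ν ν := by
  have hcomp : ∀ m n : ℤ, backshift (n + m) = backshift m ∘ backshift n (V := V) := fun m n =>
    funext fun x => (backshift_backshift m n x).symm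
  have hneg : MeasurePreserving (backshift (-1)) ν ν := by
    refine ⟨measurable_backshift _, ?_⟩
    conv_lhs => rw [← h.map_eq]
    rw [Measure.map_map (measurable_backshift _) (measurable_backshift _), ← hcomp,
      add_neg_cancel, backshift_zero, Measure.map_id]
  induction k using Int.induction_on with
  | zero => rw [backshift_zero]; exact .id ν
  | succ n ih => rw [hcomp]; exact h.comp ih
  | pred n ih => rw [sub_eq_add_neg, hcomp]; exact hneg.comp ih

end Backshift

section Homogeneous

variable {E : Type*} [MeasurableSpace E] [MulAction ℝ E] [MeasurableConstSMul ℝ E]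
  {ν : Measure E} {α : ℝ}

lemma map_smul_of_homogeneous
    (hhom : ∀ A : Set E, MeasurableSet A → ∀ c : ℝ, 0 < c →
      ν ((fun x => c • x) '' A) = ENNReal.ofReal (c ^ (-α)) * ν A)
    {c : ℝ} (hc : 0 < c) :
    ν.map (fun x => c • x) = ENNReal.ofReal (c ^ α) • ν := by
  ext A hA
  rw [Measure.map_apply (measurable_const_smul c) hA, preimage_smul₀ hc.ne', ← image_smul,
    hhom A hA _ (inv_pos.mpr hc), Real.inv_rpow hc.le, Real.rpow_neg hc.le, inv_inv,
    Measure.smul_apply, smul_eq_mul]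

lemma setLIntegral_comp_smul_of_homogeneous
    (hhom : ∀ A : Set E, MeasurableSet A → ∀ c : ℝ, 0 < c →
      ν ((fun x => c • x) '' A) = ENNReal.ofReal (c ^ (-α)) * ν A)
    {c : ℝ} (hc : 0 < c) {s : Set E} (hs : MeasurableSet s) {f : E → ℝ≥0∞} (hf : Measurable f) :
    ∫⁻ y in (fun x => c • x) ⁻¹' s, f (c • y) ∂ν = ENNReal.ofReal (c ^ α) * ∫⁻ y in s, f y ∂ν := by
  rw [← setLIntegral_map hs hf (measurable_const_smul c), map_smul_of_homogeneous hhom hc,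
    Measure.restrict_smul, lintegral_smul_measure, smul_eq_mul]

end Homogeneous

lemma setLIntegral_preimage_eq_of_map_eq_restrict {Ω β : Type*} [MeasurableSpace Ω]
    [MeasurableSpace β] {P : Measure Ω} {ν : Measure β} {Y : Ω → β} {S : Set β}
    (hY : Measurable Y) (hlaw : P.map Y = ν.restrict S) {A : Set β} (hA : MeasurableSet A)
    {f : β → ℝ≥0∞} (hf : Measurable f) :
    ∫⁻ ω in Y ⁻¹' A, f (Y ω) ∂P = ∫⁻ y in A ∩ S, f y ∂ν := by
  rw [← setLIntegral_map hA hf hY, hlaw, Measure.restrict_restrict hA]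

theorem statement0_general
    -- `V` plays the role of `ℝ^d` (`d ≥ 1`) equipped with an arbitrary norm
    {V : Type*} [NormedAddCommGroup V] [NormedSpace ℝ V]
    [MeasurableSpace V] [BorelSpace V]
    (α : ℝ)
    -- the tail measure and its properties
    (ν : Measure (ℤ → V))
    (hνshift : ν.map (backshift 1) = ν)
    (hνhom : ∀ A : Set (ℤ → V), MeasurableSet A → ∀ c : ℝ, 0 < c →
      ν ((fun x => c • x) '' A) = ENNReal.ofReal (c ^ (-α)) * ν A)
    -- the tail process `Y` and the spectral tail process `Θ`
    {Ω : Type*} [MeasurableSpace Ω] (P : Measure Ω)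
    (Y : Ω → ℤ → V) (hYmeas : Measurable Y)
    (hYlaw : P.map Y = ν.restrict {y : ℤ → V | 1 < ‖y 0‖})
    -- the statement
    (H : (ℤ → V) → ℝ≥0∞) (hH : Measurable H) (k : ℤ) (t : ℝ) (ht : 0 < t) :
    ∫⁻ ω in {ω | t < ‖Y ω (-k)‖}, H (backshift k (Y ω)) ∂P
      = ENNReal.ofReal (t ^ (-α)) *
          ∫⁻ ω in {ω | 1 / t < ‖Y ω k‖}, H (t • Y ω) ∂P := by
  have hlevel (j : ℤ) (s : ℝ) : MeasurableSet {y : ℤ → V | s < ‖y j‖} :=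
    measurableSet_lt measurable_const (measurable_pi_apply j).norm
  have hA : MeasurableSet ({y : ℤ → V | 1 < ‖y k‖} ∩ {y | t < ‖y 0‖}) :=
    (hlevel k 1).inter (hlevel 0 t)
  have hscale : ENNReal.ofReal (t ^ (-α)) * ENNReal.ofReal (t ^ α) = 1 := by
    rw [← ENNReal.ofReal_mul (by positivity), ← Real.rpow_add ht, neg_add_cancel,
      Real.rpow_zero, ENNReal.ofReal_one]
  calc ∫⁻ ω in {ω | t < ‖Y ω (-k)‖}, H (backshift k (Y ω)) ∂P
      = ∫⁻ y in {y : ℤ → V | t < ‖y (-k)‖} ∩ {y | 1 < ‖y 0‖}, H (backshift k y) ∂ν :=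
        setLIntegral_preimage_eq_of_map_eq_restrict hYmeas hYlaw (hlevel _ _)
          (hH.comp (measurable_backshift k))
    _ = ∫⁻ y in backshift k ⁻¹' ({y | 1 < ‖y k‖} ∩ {y | t < ‖y 0‖}), H (backshift k y) ∂ν := by
        congr 2; ext y; simp [and_comm]
    _ = ∫⁻ y in {y | 1 < ‖y k‖} ∩ {y | t < ‖y 0‖}, H y ∂ν :=
        (measurePreserving_backshift ⟨measurable_backshift 1, hνshift⟩ k).setLIntegral_comp_preimage
          hA hH
    _ = ENNReal.ofReal (t ^ (-α)) *
          ∫⁻ y in (fun x => t • x) ⁻¹' ({y | 1 < ‖y k‖} ∩ {y | t < ‖y 0‖}), H (t • y) ∂ν := by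
        rw [setLIntegral_comp_smul_of_homogeneous hνhom ht hA hH, ← mul_assoc, hscale, one_mul]
    _ = ENNReal.ofReal (t ^ (-α)) *
          ∫⁻ y in {y : ℤ → V | 1 / t < ‖y k‖} ∩ {y | 1 < ‖y 0‖}, H (t • y) ∂ν := by
        congr 3; ext y
        simp only [mem_inter_iff, mem_preimage, mem_ofPred_eq, Pi.smul_apply, norm_smul,
          Real.norm_of_nonneg ht.le]
        exact and_congr (div_lt_iff₀' ht).symm (lt_mul_iff_one_lt_right ht)
    _ = _ := congrArg _ (setLIntegral_preimage_eq_of_map_eq_restrict hYmeas hYlaw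
          (hlevel k (1 / t)) (hH.comp (measurable_const_smul t))).symm

/-- **The time change formula for the tail process.**
For every nonnegative measurable functional `H` on `E`, every `k ∈ ℤ` and every `t > 0`,
`E[H(B^k Y) · 1{‖Y_{−k}‖ > t}] = t^{−α} · E[H(tY) · 1{‖Y_k‖ > 1/t}]`. -/
theorem statement0
    -- `V` plays the role of `ℝ^d` (`d ≥ 1`) equipped with an arbitrary norm
    {V : Type*} [NormedAddCommGroup V] [NormedSpace ℝ V] [FiniteDimensional ℝ V]
    [Nontrivial V] [MeasurableSpace V] [BorelSpace V]
    (α : ℝ) (hα : 0 < α)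
    -- the tail measure and its properties
    (ν : Measure (ℤ → V))
    (hν0 : ν {0} = 0)
    (hν1 : ν {y : ℤ → V | 1 < ‖y 0‖} = 1)
    (hνshift : ν.map (backshift 1) = ν)
    (hνhom : ∀ A : Set (ℤ → V), MeasurableSet A → ∀ c : ℝ, 0 < c →
      ν ((fun x => c • x) '' A) = ENNReal.ofReal (c ^ (-α)) * ν A)
    -- the tail process `Y` and the spectral tail process `Θ`
    {Ω : Type*} [MeasurableSpace Ω] (P : Measure Ω) [IsProbabilityMeasure P]
    (Y : Ω → ℤ → V) (hYmeas : Measurable Y)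
    (hYlaw : P.map Y = ν.restrict {y : ℤ → V | 1 < ‖y 0‖})
    (Θ : Ω → ℤ → V) (hΘdef : ∀ ω, Θ ω = ‖Y ω 0‖⁻¹ • Y ω)
    (hPareto : ∀ u : ℝ, 1 ≤ u → P {ω | u < ‖Y ω 0‖} = ENNReal.ofReal (u ^ (-α)))
    (hindep : IndepFun (fun ω => ‖Y ω 0‖) Θ P)
    (hpolar : ∀ H : (ℤ → V) → ℝ≥0∞, Measurable H →
      ∫⁻ y in {y : ℤ → V | y 0 ≠ 0}, H y ∂ν
        = ∫⁻ r in Ioi (0 : ℝ),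
            (∫⁻ ω, H (r • Θ ω) ∂P) * ENNReal.ofReal (α * r ^ (-α - 1)))
    -- the statement
    (H : (ℤ → V) → ℝ≥0∞) (hH : Measurable H) (k : ℤ) (t : ℝ) (ht : 0 < t) :
    ∫⁻ ω in {ω | t < ‖Y ω (-k)‖}, H (backshift k (Y ω)) ∂P
      = ENNReal.ofReal (t ^ (-α)) *
          ∫⁻ ω in {ω | 1 / t < ‖Y ω k‖}, H (t • Y ω) ∂P :=
  statement0_general α ν hνshift hνhom P Y hYmeas hYlaw H hH k t ht

end
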